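/- Let Γ be a Motzkin path and x ∈ ℕ a point contained in a hill interval of Γ. Then the excursion operator pivoted at x commutes with the hill-flattening operator: 𝓔_x(𝓗(Γ)) = 𝓗(𝓔_x(Γ)). -/
import Mathlib


/-- A Motzkin path: starts at 0, steps in {−1,0,+1}, nonnegative (ℕ-valued), eventually 0. -/
def IsMotzkin (Γ : ℕ → ℕ) : Prop :=
  Γ 0 = 0 ∧
  (∀ k, (Γ (k + 1) : ℤ) - (Γ k : ℤ) = 1 ∨ (Γ (k + 1) : ℤ) - (Γ k : ℤ) = 0 ∨
    (Γ (k + 1) : ℤ) - (Γ k : ℤ) = -1) ∧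
  ∃ N, ∀ k, N ≤ k → Γ k = 0

/-- `[a,b]` is a hill interval of `Γ`: `Γ (a-1) = Γ c - 1 = Γ (b+1)` for all `c ∈ [a,b]`. -/
def IsHillInterval (Γ : ℕ → ℕ) (a b : ℕ) : Prop :=
  1 ≤ a ∧ a ≤ b ∧ ∀ c, a ≤ c → c ≤ b → Γ c = Γ (a - 1) + 1 ∧ Γ (b + 1) = Γ (a - 1)

open Classical in
/-- The hill-flattening operator: decrease `Γ` by 1 on every point of a hill interval. -/
noncomputable def hillFlatten (Γ : ℕ → ℕ) : ℕ → ℕ := fun k =>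
  if ∃ a b, IsHillInterval Γ a b ∧ a ≤ k ∧ k ≤ b then Γ k - 1 else Γ k

/-- The number of hill intervals of `Γ`. -/
noncomputable def numHills (Γ : ℕ → ℕ) : ℕ :=
  {q : ℕ × ℕ | IsHillInterval Γ q.1 q.2}.ncard

/-- The excursion operator pivoted at `x`:
`𝓔_x(Γ)(k) = Γ k − min_{min(x,k) ≤ y ≤ max(x,k)} Γ y`. -/
def pivotExcPath (x : ℕ) (Γ : ℕ → ℕ) : ℕ → ℕ := fun k =>
  Γ k - (Finset.Icc (min x k) (max x k)).inf' (Finset.nonempty_Icc.mpr min_le_max) Γ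

noncomputable def Minf (Γ : ℕ → ℕ) (l r : ℕ) : ℕ :=
  (Finset.Icc (min l r) (max l r)).inf' (Finset.nonempty_Icc.mpr min_le_max) Γ

lemma pivot_eq (x : ℕ) (Γ : ℕ → ℕ) (k : ℕ) : pivotExcPath x Γ k = Γ k - Minf Γ x k := rfl

lemma Minf_le {Γ : ℕ → ℕ} {l r y : ℕ} (h1 : min l r ≤ y) (h2 : y ≤ max l r) :
    Minf Γ l r ≤ Γ y :=
  Finset.inf'_le _ (Finset.mem_Icc.mpr ⟨h1, h2⟩)

lemma le_Minf {Γ : ℕ → ℕ} {l r c : ℕ} (H : ∀ y, min l r ≤ y → y ≤ max l r → c ≤ Γ y) :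
    c ≤ Minf Γ l r :=
  Finset.le_inf' _ _ fun y hy => H y (Finset.mem_Icc.mp hy).1 (Finset.mem_Icc.mp hy).2

lemma Minf_exists (Γ : ℕ → ℕ) (l r : ℕ) :
    ∃ y, min l r ≤ y ∧ y ≤ max l r ∧ Γ y = Minf Γ l r := by
  obtain ⟨y, hy, h⟩ := Finset.exists_mem_eq_inf' (Finset.nonempty_Icc.mpr min_le_max) Γ
  exact ⟨y, (Finset.mem_Icc.mp hy).1, (Finset.mem_Icc.mp hy).2, h.symm⟩

lemma Minf_self (Γ : ℕ → ℕ) (l : ℕ) : Minf Γ l l = Γ l := by simp [Minf]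

lemma step_bounds {Γ : ℕ → ℕ} (hΓ : IsMotzkin Γ) (k : ℕ) :
    Γ (k+1) ≤ Γ k + 1 ∧ Γ k ≤ Γ (k+1) + 1 := by
  rcases hΓ.2.1 k with h | h | h <;> omega

lemma hillFlatten_pos {Γ : ℕ → ℕ} {k a' b' : ℕ} (h : IsHillInterval Γ a' b')
    (h1 : a' ≤ k) (h2 : k ≤ b') : hillFlatten Γ k = Γ k - 1 := by
  simp only [hillFlatten]
  rw [if_pos ⟨a', b', h, h1, h2⟩]

lemma hillFlatten_neg {Γ : ℕ → ℕ} {k : ℕ}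
    (h : ¬ ∃ a b, IsHillInterval Γ a b ∧ a ≤ k ∧ k ≤ b) : hillFlatten Γ k = Γ k := by
  simp only [hillFlatten]
  rw [if_neg h]

lemma hill_unique {Γ : ℕ → ℕ} {a b a' b' k : ℕ} (h1 : IsHillInterval Γ a b)
    (h2 : IsHillInterval Γ a' b') (hk1 : a ≤ k) (hk2 : k ≤ b)
    (hk1' : a' ≤ k) (hk2' : k ≤ b') : a = a' ∧ b = b' := by
  obtain ⟨ha1, hab1, hc1⟩ := h1
  obtain ⟨ha2, hab2, hc2⟩ := h2
  have key : ∀ (u v u' v' : ℕ), 1 ≤ u → u ≤ v →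
      (∀ c, u ≤ c → c ≤ v → Γ c = Γ (u-1) + 1 ∧ Γ (v+1) = Γ (u-1)) →
      1 ≤ u' → u' ≤ v' →
      (∀ c, u' ≤ c → c ≤ v' → Γ c = Γ (u'-1) + 1 ∧ Γ (v'+1) = Γ (u'-1)) →
      u ≤ k → k ≤ v → u' ≤ k → k ≤ v' → ¬ (u < u') := by
    intro u v u' v' hu huv hcu hu' huv' hcu' h1 h2 h3 h4 hlt
    have e1 := (hcu (u'-1) (by omega) (by omega)).1
    have e2 := (hcu' k h3 h4).1
    have e3 := (hcu k h1 h2).1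
    omega
  have haa : a = a' := by
    have n1 := key a b a' b' ha1 hab1 hc1 ha2 hab2 hc2 hk1 hk2 hk1' hk2'
    have n2 := key a' b' a b ha2 hab2 hc2 ha1 hab1 hc1 hk1' hk2' hk1 hk2
    omega
  refine ⟨haa, ?_⟩
  have key2 : ∀ (v v' : ℕ), a ≤ v → a ≤ v' →
      (∀ c, a ≤ c → c ≤ v → Γ c = Γ (a-1) + 1 ∧ Γ (v+1) = Γ (a-1)) →
      (∀ c, a ≤ c → c ≤ v' → Γ c = Γ (a-1) + 1 ∧ Γ (v'+1) = Γ (a-1)) →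
      ¬ (v < v') := by
    intro v v' hv hv' hcv hcv' hlt
    have e1 := (hcv' (v+1) (by omega) (by omega)).1
    have e2 := (hcv a le_rfl hv).2
    omega
  subst haa
  have n1 := key2 b b' hab1 hab2 hc1 hc2
  have n2 := key2 b' b hab2 hab1 hc2 hc1
  omega

lemma not_hill_right {Γ : ℕ → ℕ} {a b a' b' : ℕ} (hab : IsHillInterval Γ a b)
    (h2 : IsHillInterval Γ a' b') (hl : a' ≤ b + 1) (hr : b + 1 ≤ b') : False := by
  rcases Nat.lt_or_ge b a' with hba' | hba'
  · have ha' : a' = b + 1 := by omega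
    have e1 := (h2.2.2 (b+1) (by omega) (by omega)).1
    have e2 := (hab.2.2 b hab.2.1 le_rfl).1
    have e3 := (hab.2.2 a le_rfl hab.2.1).2
    have := hab.1
    rw [ha'] at e1
    simp at e1
    omega
  · have := hill_unique hab h2 hab.2.1 le_rfl hba' (by omega)
    omega

lemma not_hill_left {Γ : ℕ → ℕ} {a b a' b' : ℕ} (hab : IsHillInterval Γ a b)
    (h2 : IsHillInterval Γ a' b') (hl : a' ≤ a - 1) (hr : a - 1 ≤ b') : False := by
  have ha1 := hab.1
  rcases Nat.lt_or_ge b' a with hb' | hb'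
  · have hb'e : b' = a - 1 := by omega
    have e1 := (h2.2.2 (a-1) hl hr).2
    have e2 := (h2.2.2 (a-1) hl hr).1
    have e3 := (hab.2.2 a le_rfl hab.2.1).1
    rw [hb'e] at e1
    have h4 : a - 1 + 1 = a := by omega
    rw [h4] at e1
    omega
  · have := hill_unique hab h2 le_rfl hab.2.1 (by omega) hb'
    omega

lemma Minf_step_right {Γ : ℕ → ℕ} {l c : ℕ} (h : l ≤ c) :
    Minf Γ l (c+1) ≤ Minf Γ l c ∧ Minf Γ l (c+1) ≤ Γ (c+1) ∧
      (Minf Γ l (c+1) = Minf Γ l c ∨ Minf Γ l (c+1) = Γ (c+1)) := by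
  obtain ⟨y0, hy01, hy02, hy0⟩ := Minf_exists Γ l c
  have hle1 : Minf Γ l (c+1) ≤ Minf Γ l c := by
    rw [← hy0]; exact Minf_le (by omega) (by omega)
  have hle2 : Minf Γ l (c+1) ≤ Γ (c+1) := Minf_le (by omega) (by omega)
  refine ⟨hle1, hle2, ?_⟩
  obtain ⟨y1, hy11, hy12, hy1⟩ := Minf_exists Γ l (c+1)
  rcases Nat.lt_or_ge y1 (c+1) with hc | hc
  · left
    have : Minf Γ l c ≤ Γ y1 := Minf_le (by omega) (by omega)
    omega
  · right
    have : y1 = c + 1 := by omega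
    rw [this] at hy1; omega

lemma Minf_step_left {Γ : ℕ → ℕ} {c r : ℕ} (h : c + 1 ≤ r) :
    Minf Γ c r ≤ Minf Γ (c+1) r ∧ Minf Γ c r ≤ Γ c ∧
      (Minf Γ c r = Minf Γ (c+1) r ∨ Minf Γ c r = Γ c) := by
  obtain ⟨y0, hy01, hy02, hy0⟩ := Minf_exists Γ (c+1) r
  have hle1 : Minf Γ c r ≤ Minf Γ (c+1) r := by
    rw [← hy0]; exact Minf_le (by omega) (by omega)
  have hle2 : Minf Γ c r ≤ Γ c := Minf_le (by omega) (by omega)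
  refine ⟨hle1, hle2, ?_⟩
  obtain ⟨y1, hy11, hy12, hy1⟩ := Minf_exists Γ c r
  rcases Nat.lt_or_ge c y1 with hc | hc
  · left
    have : Minf Γ (c+1) r ≤ Γ y1 := Minf_le (by omega) (by omega)
    omega
  · right
    have : y1 = c := by omega
    rw [this] at hy1; omega

section Regions

variable {Γ : ℕ → ℕ} {a b x : ℕ}

/-- right region: pivoted min equals min over `[b+1,k]`. -/
lemma r_m (hab : IsHillInterval Γ a b) (hx1 : a ≤ x) (hx2 : x ≤ b)
    {k : ℕ} (hk : b + 1 ≤ k) : Minf Γ x k = Minf Γ (b+1) k := by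
  have hb1 : Γ (b+1) = Γ (a-1) := (hab.2.2 a le_rfl hab.2.1).2
  apply le_antisymm
  · obtain ⟨y0, h1, h2, h3⟩ := Minf_exists Γ (b+1) k
    rw [← h3]
    exact Minf_le (by omega) (by omega)
  · apply le_Minf
    intro y hy1 hy2
    rcases Nat.lt_or_ge y (b+1) with hc | hc
    · have hy : Γ y = Γ (a-1) + 1 := (hab.2.2 y (by omega) (by omega)).1
      have : Minf Γ (b+1) k ≤ Γ (b+1) := Minf_le (by omega) (by omega)
      omega
    · exact Minf_le (by omega) (by omega)

/-- left region: pivoted min equals min over `[k,a-1]`. -/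
lemma l_m (hab : IsHillInterval Γ a b) (hx1 : a ≤ x) (hx2 : x ≤ b)
    {k : ℕ} (hk : k ≤ a - 1) : Minf Γ x k = Minf Γ k (a-1) := by
  have ha1 := hab.1
  have hb1 : Γ (b+1) = Γ (a-1) := (hab.2.2 a le_rfl hab.2.1).2
  apply le_antisymm
  · obtain ⟨y0, h1, h2, h3⟩ := Minf_exists Γ k (a-1)
    rw [← h3]
    exact Minf_le (by omega) (by omega)
  · apply le_Minf
    intro y hy1 hy2
    rcases Nat.lt_or_ge (a-1) y with hc | hc
    · have hy : Γ y = Γ (a-1) + 1 := (hab.2.2 y (by omega) (by omega)).1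
      have : Minf Γ k (a-1) ≤ Γ (a-1) := Minf_le (by omega) (by omega)
      omega
    · exact Minf_le (by omega) (by omega)

/-- right region: the flattened min agrees. -/
lemma r_mH (hab : IsHillInterval Γ a b) (hx1 : a ≤ x) (hx2 : x ≤ b)
    {k : ℕ} (hk : b + 1 ≤ k) :
    Minf (hillFlatten Γ) x k = Minf Γ (b+1) k := by
  have ha1 := hab.1
  have hb1 : Γ (b+1) = Γ (a-1) := (hab.2.2 a le_rfl hab.2.1).2
  apply le_antisymm
  · obtain ⟨y0, h1, h2, h3⟩ := Minf_exists Γ (b+1) k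
    have hy0l : b + 1 ≤ y0 := by omega
    have hy0r : y0 ≤ k := by omega
    have hnh : ¬ ∃ a'' b'', IsHillInterval Γ a'' b'' ∧ a'' ≤ y0 ∧ y0 ≤ b'' := by
      rintro ⟨a'', b'', h'', hy1, hy2⟩
      have ha'' : b + 2 ≤ a'' := by
        by_contra hcon
        exact not_hill_right hab h'' (by omega) (by omega)
      have e1 : Γ y0 = Γ (a''-1) + 1 := (h''.2.2 y0 hy1 hy2).1
      have e2 : Minf Γ (b+1) k ≤ Γ (a''-1) := Minf_le (by omega) (by omega)
      omega
    have : hillFlatten Γ y0 = Γ y0 := hillFlatten_neg hnh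
    calc Minf (hillFlatten Γ) x k ≤ hillFlatten Γ y0 := Minf_le (by omega) (by omega)
      _ = Minf Γ (b+1) k := by rw [this, h3]
  · apply le_Minf
    intro y hy1 hy2
    have hyk : y ≤ k := by omega
    rcases Nat.lt_or_ge y (b+1) with hc | hc
    · have hya : a ≤ y := by omega
      have hfy : hillFlatten Γ y = Γ y - 1 := hillFlatten_pos hab hya (by omega)
      have hy : Γ y = Γ (a-1) + 1 := (hab.2.2 y hya (by omega)).1
      have : Minf Γ (b+1) k ≤ Γ (b+1) := Minf_le (by omega) (by omega)
      omega
    · by_cases hy : ∃ a'' b'', IsHillInterval Γ a'' b'' ∧ a'' ≤ y ∧ y ≤ b''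
      · obtain ⟨a'', b'', h'', hh1, hh2⟩ := hy
        have ha'' : b + 2 ≤ a'' := by
          by_contra hcon
          exact not_hill_right hab h'' (by omega) (by omega)
        have e1 : Γ y = Γ (a''-1) + 1 := (h''.2.2 y hh1 hh2).1
        have e2 : Minf Γ (b+1) k ≤ Γ (a''-1) := Minf_le (by omega) (by omega)
        have hfy : hillFlatten Γ y = Γ y - 1 := hillFlatten_pos h'' hh1 hh2
        omega
      · have hfy : hillFlatten Γ y = Γ y := hillFlatten_neg hy
        have : Minf Γ (b+1) k ≤ Γ y := Minf_le (by omega) (by omega)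
        omega

/-- left region: the flattened min agrees. -/
lemma l_mH (hab : IsHillInterval Γ a b) (hx1 : a ≤ x) (hx2 : x ≤ b)
    {k : ℕ} (hk : k ≤ a - 1) :
    Minf (hillFlatten Γ) x k = Minf Γ k (a-1) := by
  have ha1 := hab.1
  apply le_antisymm
  · obtain ⟨y0, h1, h2, h3⟩ := Minf_exists Γ k (a-1)
    have hy0l : k ≤ y0 := by omega
    have hy0r : y0 ≤ a - 1 := by omega
    have hnh : ¬ ∃ a'' b'', IsHillInterval Γ a'' b'' ∧ a'' ≤ y0 ∧ y0 ≤ b'' := by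
      rintro ⟨a'', b'', h'', hy1, hy2⟩
      have hb'' : b'' + 2 ≤ a := by
        by_contra hcon
        exact not_hill_left hab h'' (by omega) (by omega)
      have e1 : Γ y0 = Γ (a''-1) + 1 := (h''.2.2 y0 hy1 hy2).1
      have e2 : Γ (b''+1) = Γ (a''-1) := (h''.2.2 y0 hy1 hy2).2
      have e3 : Minf Γ k (a-1) ≤ Γ (b''+1) := Minf_le (by omega) (by omega)
      omega
    have : hillFlatten Γ y0 = Γ y0 := hillFlatten_neg hnh
    calc Minf (hillFlatten Γ) x k ≤ hillFlatten Γ y0 := Minf_le (by omega) (by omega)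
      _ = Minf Γ k (a-1) := by rw [this, h3]
  · apply le_Minf
    intro y hy1 hy2
    have hyk : k ≤ y := by omega
    rcases Nat.lt_or_ge (a-1) y with hc | hc
    · have hya : a ≤ y := by omega
      have hyb : y ≤ b := by omega
      have hfy : hillFlatten Γ y = Γ y - 1 := hillFlatten_pos hab hya hyb
      have hy : Γ y = Γ (a-1) + 1 := (hab.2.2 y hya hyb).1
      have : Minf Γ k (a-1) ≤ Γ (a-1) := Minf_le (by omega) (by omega)
      omega
    · by_cases hy : ∃ a'' b'', IsHillInterval Γ a'' b'' ∧ a'' ≤ y ∧ y ≤ b''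
      · obtain ⟨a'', b'', h'', hh1, hh2⟩ := hy
        have hb'' : b'' + 2 ≤ a := by
          by_contra hcon
          exact not_hill_left hab h'' (by omega) (by omega)
        have e1 : Γ y = Γ (a''-1) + 1 := (h''.2.2 y hh1 hh2).1
        have e2 : Γ (b''+1) = Γ (a''-1) := (h''.2.2 y hh1 hh2).2
        have e3 : Minf Γ k (a-1) ≤ Γ (b''+1) := Minf_le (by omega) (by omega)
        have hfy : hillFlatten Γ y = Γ y - 1 := hillFlatten_pos h'' hh1 hh2
        omega
      · have hfy : hillFlatten Γ y = Γ y := hillFlatten_neg hy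
        have : Minf Γ k (a-1) ≤ Γ y := Minf_le (by omega) (by omega)
        omega


/-- right region: a hill of `Γ` beyond `b+1` is a hill of the pivoted excursion. -/
lemma r_hill_to_E (hab : IsHillInterval Γ a b) (hx1 : a ≤ x) (hx2 : x ≤ b)
    {a' b' : ℕ} (h : IsHillInterval Γ a' b') (ha' : b + 2 ≤ a') :
    IsHillInterval (pivotExcPath x Γ) a' b' := by
  have hab' := h.2.1
  have hM0 : Minf Γ (b+1) (a'-1) ≤ Γ (a'-1) := Minf_le (by omega) (by omega)
  have hb'1 : Γ (b'+1) = Γ (a'-1) := (h.2.2 a' le_rfl hab').2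
  have hconst : ∀ c, a' - 1 ≤ c → c ≤ b' + 1 →
      Minf Γ (b+1) c = Minf Γ (b+1) (a'-1) := by
    intro c hc1 hc2
    apply le_antisymm
    · obtain ⟨y0, h1, h2, h3⟩ := Minf_exists Γ (b+1) (a'-1)
      rw [← h3]
      exact Minf_le (by omega) (by omega)
    · apply le_Minf
      intro y hy1 hy2
      rcases Nat.lt_or_ge (a'-1) y with hgt | hle
      · rcases Nat.lt_or_ge b' y with hgt2 | hle2
        · have : y = b' + 1 := by omega
          rw [this, hb'1]
          exact Minf_le (by omega) (by omega)
        · have e1 : Γ y = Γ (a'-1) + 1 := (h.2.2 y (by omega) hle2).1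
          omega
      · exact Minf_le (by omega) (by omega)
  refine ⟨h.1, hab', fun c hc1 hc2 => ?_⟩
  have eC : pivotExcPath x Γ c = Γ c - Minf Γ (b+1) (a'-1) := by
    rw [pivot_eq, r_m hab hx1 hx2 (by omega), hconst c (by omega) (by omega)]
  have eA : pivotExcPath x Γ (a'-1) = Γ (a'-1) - Minf Γ (b+1) (a'-1) := by
    rw [pivot_eq, r_m hab hx1 hx2 (by omega), hconst (a'-1) le_rfl (by omega)]
  have eB : pivotExcPath x Γ (b'+1) = Γ (b'+1) - Minf Γ (b+1) (a'-1) := by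
    rw [pivot_eq, r_m hab hx1 hx2 (by omega), hconst (b'+1) (by omega) le_rfl]
  have hc : Γ c = Γ (a'-1) + 1 := (h.2.2 c hc1 hc2).1
  constructor
  · rw [eC, eA, hc]; omega
  · rw [eB, eA, hb'1]

/-- left region: a hill of `Γ` before `a-1` is a hill of the pivoted excursion. -/
lemma l_hill_to_E (hab : IsHillInterval Γ a b) (hx1 : a ≤ x) (hx2 : x ≤ b)
    {a' b' : ℕ} (h : IsHillInterval Γ a' b') (hb' : b' + 1 ≤ a - 1) :
    IsHillInterval (pivotExcPath x Γ) a' b' := by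
  have hab' := h.2.1
  have ha'1 := h.1
  have hb'1 : Γ (b'+1) = Γ (a'-1) := (h.2.2 a' le_rfl hab').2
  have hM0 : Minf Γ (b'+1) (a-1) ≤ Γ (b'+1) := Minf_le (by omega) (by omega)
  have hconst : ∀ c, a' - 1 ≤ c → c ≤ b' + 1 →
      Minf Γ c (a-1) = Minf Γ (b'+1) (a-1) := by
    intro c hc1 hc2
    apply le_antisymm
    · obtain ⟨y0, h1, h2, h3⟩ := Minf_exists Γ (b'+1) (a-1)
      rw [← h3]
      exact Minf_le (by omega) (by omega)
    · apply le_Minf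
      intro y hy1 hy2
      rcases Nat.lt_or_ge y (b'+1) with hgt | hle
      · rcases Nat.lt_or_ge y a' with hgt2 | hle2
        · have : y = a' - 1 := by omega
          rw [this, ← hb'1]
          exact Minf_le (by omega) (by omega)
        · have e1 : Γ y = Γ (a'-1) + 1 := (h.2.2 y hle2 (by omega)).1
          omega
      · exact Minf_le (by omega) (by omega)
  refine ⟨ha'1, hab', fun c hc1 hc2 => ?_⟩
  have eC : pivotExcPath x Γ c = Γ c - Minf Γ (b'+1) (a-1) := by
    rw [pivot_eq, l_m hab hx1 hx2 (by omega), hconst c (by omega) (by omega)]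
  have eA : pivotExcPath x Γ (a'-1) = Γ (a'-1) - Minf Γ (b'+1) (a-1) := by
    rw [pivot_eq, l_m hab hx1 hx2 (by omega), hconst (a'-1) le_rfl (by omega)]
  have eB : pivotExcPath x Γ (b'+1) = Γ (b'+1) - Minf Γ (b'+1) (a-1) := by
    rw [pivot_eq, l_m hab hx1 hx2 (by omega), hconst (b'+1) (by omega) le_rfl]
  have hc : Γ c = Γ (a'-1) + 1 := (h.2.2 c hc1 hc2).1
  constructor
  · rw [eC, eA, hc]; omega
  · rw [eB, eA, hb'1]

end Regions

lemma const_of_steps {M : ℕ → ℕ} {l r : ℕ} (h : ∀ c, l ≤ c → c < r → M (c+1) = M c) :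
    ∀ c, l ≤ c → c ≤ r → M c = M l := by
  intro c hc1 hc2
  induction c with
  | zero => have : l = 0 := by omega
            rw [this]
  | succ n ih =>
    rcases Nat.lt_or_ge n l with hc | hc
    · have : l = n + 1 := by omega
      rw [this]
    · rw [h n hc (by omega)]
      exact ih hc (by omega)

lemma const_of_steps_down {M : ℕ → ℕ} {l r : ℕ} (h : ∀ c, l ≤ c → c < r → M c = M (c+1)) :
    ∀ c, l ≤ c → c ≤ r → M c = M r := by
  have key : ∀ n c, l ≤ c → c + n = r → M c = M r := by
    intro n
    induction n with
    | zero => intro c h1 h2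
              rw [show c = r by omega]
    | succ n ih =>
      intro c h1 h2
      rw [h c h1 (by omega)]
      exact ih (c+1) (by omega) (by omega)
  intro c h1 h2
  exact key (r - c) c h1 (by omega)

section Regions2

variable {Γ : ℕ → ℕ} {a b x : ℕ}

/-- right region: a hill of the pivoted excursion containing `k ≥ b+1` is a hill of `Γ`. -/
lemma r_E_to_hill (hΓ : IsMotzkin Γ) (hab : IsHillInterval Γ a b) (hx1 : a ≤ x) (hx2 : x ≤ b)
    {a' b' k : ℕ} (hk : b + 1 ≤ k) (hE : IsHillInterval (pivotExcPath x Γ) a' b')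
    (h1 : a' ≤ k) (h2 : k ≤ b') : IsHillInterval Γ a' b' := by
  have hE1 := hE.1
  have hE2 := hE.2.1
  have hb1 : Γ (b+1) = Γ (a-1) := (hab.2.2 a le_rfl hab.2.1).2
  have ha' : b + 2 ≤ a' := by
    by_contra hcon
    have e1 : pivotExcPath x Γ (b+1) =
        pivotExcPath x Γ (a'-1) + 1 := (hE.2.2 (b+1) (by omega) (by omega)).1
    have e2 : pivotExcPath x Γ (b+1) = 0 := by
      rw [pivot_eq, r_m hab hx1 hx2 le_rfl, Minf_self]
      omega
    omega
  have hstepc : ∀ c, a' - 1 ≤ c → c < b' + 1 →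
      Minf Γ (b+1) (c+1) = Minf Γ (b+1) c := by
    intro c hc1 hc2
    have hstep := Minf_step_right (Γ := Γ) (l := b+1) (c := c) (by omega)
    rcases hstep.2.2 with heq | heq
    · exact heq
    · rcases Nat.lt_or_ge b' (c+1) with hcase | hcase
      · -- c = b'
        rcases le_or_gt (Minf Γ (b+1) c) (Γ (c+1)) with hge | hlt
        · omega
        · have eb : pivotExcPath x Γ c = pivotExcPath x Γ (a'-1) + 1 :=
            (hE.2.2 c (by omega) (by omega)).1
          have eb2 : pivotExcPath x Γ c = Γ c - Minf Γ (b+1) c := by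
            rw [pivot_eq, r_m hab hx1 hx2 (by omega)]
          have hMle : Minf Γ (b+1) c ≤ Γ c := Minf_le (by omega) (by omega)
          have hsb := step_bounds hΓ c
          omega
      · have ec : pivotExcPath x Γ (c+1) = pivotExcPath x Γ (a'-1) + 1 :=
          (hE.2.2 (c+1) (by omega) hcase).1
        have ec2 : pivotExcPath x Γ (c+1) = Γ (c+1) - Minf Γ (b+1) (c+1) := by
          rw [pivot_eq, r_m hab hx1 hx2 (by omega)]
        omega
  have hconst' : ∀ c, a' - 1 ≤ c → c ≤ b' + 1 →
      Minf Γ (b+1) c = Minf Γ (b+1) (a'-1) :=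
    const_of_steps (M := fun c => Minf Γ (b+1) c) hstepc
  have hM0a : Minf Γ (b+1) (a'-1) ≤ Γ (a'-1) := Minf_le (by omega) (by omega)
  refine ⟨hE1, hE2, fun c hc1 hc2 => ?_⟩
  have hEc := hE.2.2 c hc1 hc2
  have eC : pivotExcPath x Γ c = Γ c - Minf Γ (b+1) (a'-1) := by
    rw [pivot_eq, r_m hab hx1 hx2 (by omega), hconst' c (by omega) (by omega)]
  have eA : pivotExcPath x Γ (a'-1) = Γ (a'-1) - Minf Γ (b+1) (a'-1) := by
    rw [pivot_eq, r_m hab hx1 hx2 (by omega), hconst' (a'-1) le_rfl (by omega)]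
  have eB : pivotExcPath x Γ (b'+1) = Γ (b'+1) - Minf Γ (b+1) (a'-1) := by
    rw [pivot_eq, r_m hab hx1 hx2 (by omega), hconst' (b'+1) (by omega) le_rfl]
  have hM0c : Minf Γ (b+1) (a'-1) ≤ Γ c := by
    have h := Minf_le (Γ := Γ) (l := b+1) (r := c) (y := c) (by omega) (by omega)
    rw [hconst' c (by omega) (by omega)] at h
    exact h
  have hM0b : Minf Γ (b+1) (a'-1) ≤ Γ (b'+1) := by
    have h := Minf_le (Γ := Γ) (l := b+1) (r := b'+1) (y := b'+1) (by omega) (by omega)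
    rw [hconst' (b'+1) (by omega) le_rfl] at h
    exact h
  rw [eC, eA, eB] at hEc
  omega

/-- left region: a hill of the pivoted excursion containing `k ≤ a-1` is a hill of `Γ`. -/
lemma l_E_to_hill (hΓ : IsMotzkin Γ) (hab : IsHillInterval Γ a b) (hx1 : a ≤ x) (hx2 : x ≤ b)
    {a' b' k : ℕ} (hk : k ≤ a - 1) (hE : IsHillInterval (pivotExcPath x Γ) a' b')
    (h1 : a' ≤ k) (h2 : k ≤ b') : IsHillInterval Γ a' b' := by
  have hE1 := hE.1
  have hE2 := hE.2.1
  have ha1 := hab.1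
  have hb' : b' + 1 ≤ a - 1 := by
    by_contra hcon
    have e1 : pivotExcPath x Γ (a-1) =
        pivotExcPath x Γ (a'-1) + 1 := (hE.2.2 (a-1) (by omega) (by omega)).1
    have e2 : pivotExcPath x Γ (a-1) = 0 := by
      rw [pivot_eq, l_m hab hx1 hx2 le_rfl, Minf_self]
      omega
    omega
  have hstepc : ∀ c, a' - 1 ≤ c → c < b' + 1 →
      Minf Γ c (a-1) = Minf Γ (c+1) (a-1) := by
    intro c hc1 hc2
    have hstep := Minf_step_left (Γ := Γ) (c := c) (r := a-1) (by omega)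
    rcases hstep.2.2 with heq | heq
    · exact heq
    · rcases Nat.lt_or_ge c a' with hcase | hcase
      · -- c = a' - 1
        rcases le_or_gt (Minf Γ (c+1) (a-1)) (Γ c) with hge | hlt
        · omega
        · have hc'' : c + 1 = a' := by omega
          rw [hc''] at hlt
          have ea : pivotExcPath x Γ a' = pivotExcPath x Γ (a'-1) + 1 :=
            (hE.2.2 a' le_rfl hE2).1
          have ea2 : pivotExcPath x Γ a' = Γ a' - Minf Γ a' (a-1) := by
            rw [pivot_eq, l_m hab hx1 hx2 (by omega)]
          have hMle : Minf Γ a' (a-1) ≤ Γ a' := Minf_le (by omega) (by omega)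
          have hsb := step_bounds hΓ c
          rw [hc''] at hsb
          omega
      · have ec : pivotExcPath x Γ c = pivotExcPath x Γ (a'-1) + 1 :=
          (hE.2.2 c hcase (by omega)).1
        have ec2 : pivotExcPath x Γ c = Γ c - Minf Γ c (a-1) := by
          rw [pivot_eq, l_m hab hx1 hx2 (by omega)]
        omega
  have hconst' : ∀ c, a' - 1 ≤ c → c ≤ b' + 1 →
      Minf Γ c (a-1) = Minf Γ (b'+1) (a-1) :=
    const_of_steps_down (M := fun c => Minf Γ c (a-1)) hstepc
  refine ⟨hE1, hE2, fun c hc1 hc2 => ?_⟩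
  have hEc := hE.2.2 c hc1 hc2
  have eC : pivotExcPath x Γ c = Γ c - Minf Γ (b'+1) (a-1) := by
    rw [pivot_eq, l_m hab hx1 hx2 (by omega), hconst' c (by omega) (by omega)]
  have eA : pivotExcPath x Γ (a'-1) = Γ (a'-1) - Minf Γ (b'+1) (a-1) := by
    rw [pivot_eq, l_m hab hx1 hx2 (by omega), hconst' (a'-1) le_rfl (by omega)]
  have eB : pivotExcPath x Γ (b'+1) = Γ (b'+1) - Minf Γ (b'+1) (a-1) := by
    rw [pivot_eq, l_m hab hx1 hx2 (by omega), hconst' (b'+1) (by omega) le_rfl]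
  have hM0c : Minf Γ (b'+1) (a-1) ≤ Γ c := by
    have h := Minf_le (Γ := Γ) (l := c) (r := a-1) (y := c) (by omega) (by omega)
    rw [hconst' c (by omega) (by omega)] at h
    exact h
  have hM0a : Minf Γ (b'+1) (a-1) ≤ Γ (a'-1) := by
    have h := Minf_le (Γ := Γ) (l := a'-1) (r := a-1) (y := a'-1) (by omega) (by omega)
    rw [hconst' (a'-1) le_rfl (by omega)] at h
    exact h
  have hM0b : Minf Γ (b'+1) (a-1) ≤ Γ (b'+1) := Minf_le (by omega) (by omega)
  rw [eC, eA, eB] at hEc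
  omega

end Regions2

theorem stmt12 (Γ : ℕ → ℕ) (hΓ : IsMotzkin Γ) (a b x : ℕ)
    (hab : IsHillInterval Γ a b) (hx1 : a ≤ x) (hx2 : x ≤ b) :
    pivotExcPath x (hillFlatten Γ) = hillFlatten (pivotExcPath x Γ) := by
  funext k
  have ha1 := hab.1
  have hb1 : Γ (b+1) = Γ (a-1) := (hab.2.2 a le_rfl hab.2.1).2
  rcases le_or_gt k (a-1) with hk | hk'
  · -- left region
    by_cases hkh : ∃ a' b', IsHillInterval Γ a' b' ∧ a' ≤ k ∧ k ≤ b'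
    · obtain ⟨a', b', h', h1', h2'⟩ := hkh
      have hb'' : b' + 1 ≤ a - 1 := by
        by_contra hcon
        exact not_hill_left hab h' (by omega) (by omega)
      have hHk : hillFlatten Γ k = Γ k - 1 := hillFlatten_pos h' h1' h2'
      have hmH := l_mH hab hx1 hx2 hk
      have hm := l_m hab hx1 hx2 hk
      have hEhill := l_hill_to_E hab hx1 hx2 h' hb''
      have hRH : hillFlatten (pivotExcPath x Γ) k = pivotExcPath x Γ k - 1 :=
        hillFlatten_pos hEhill h1' h2'
      have hGk : Γ k = Γ (a'-1) + 1 := (h'.2.2 k h1' h2').1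
      have hGb : Γ (b'+1) = Γ (a'-1) := (h'.2.2 k h1' h2').2
      have hMle : Minf Γ k (a-1) ≤ Γ (b'+1) := Minf_le (by omega) (by omega)
      rw [pivot_eq, hHk, hmH, hRH, pivot_eq, hm]
      omega
    · have hHk : hillFlatten Γ k = Γ k := hillFlatten_neg hkh
      have hmH := l_mH hab hx1 hx2 hk
      have hm := l_m hab hx1 hx2 hk
      have hRH : hillFlatten (pivotExcPath x Γ) k = pivotExcPath x Γ k := by
        apply hillFlatten_neg
        rintro ⟨a', b', hE', h1', h2'⟩
        exact hkh ⟨a', b', l_E_to_hill hΓ hab hx1 hx2 hk hE' h1' h2', h1', h2'⟩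
      rw [pivot_eq, hHk, hmH, hRH, pivot_eq, hm]
  · rcases le_or_gt k b with hk2 | hk2
    · -- middle region
      have hk1 : a ≤ k := by omega
      have hΓk : Γ k = Γ (a-1) + 1 := (hab.2.2 k hk1 hk2).1
      have hHk : hillFlatten Γ k = Γ k - 1 := hillFlatten_pos hab hk1 hk2
      have hmH : Minf (hillFlatten Γ) x k = Γ (a-1) := by
        apply le_antisymm
        · have hfx : hillFlatten Γ x = Γ x - 1 := hillFlatten_pos hab hx1 hx2
          have hx' : Γ x = Γ (a-1) + 1 := (hab.2.2 x hx1 hx2).1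
          have hmem := Minf_le (Γ := hillFlatten Γ) (l := x) (r := k) (y := x)
            (by omega) (by omega)
          omega
        · apply le_Minf
          intro y hy1 hy2
          have hya : a ≤ y := by omega
          have hyb : y ≤ b := by omega
          have hfy : hillFlatten Γ y = Γ y - 1 := hillFlatten_pos hab hya hyb
          have hy' : Γ y = Γ (a-1) + 1 := (hab.2.2 y hya hyb).1
          omega
      have hE0 : pivotExcPath x Γ k = 0 := by
        rw [pivot_eq]
        have hge : Γ k ≤ Minf Γ x k := by
          apply le_Minf
          intro y hy1 hy2
          have := (hab.2.2 y (by omega) (by omega)).1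
          omega
        omega
      have hRH : hillFlatten (pivotExcPath x Γ) k = pivotExcPath x Γ k := by
        apply hillFlatten_neg
        rintro ⟨a', b', hE', h1', h2'⟩
        have := (hE'.2.2 k h1' h2').1
        omega
      rw [pivot_eq, hHk, hmH, hRH, hE0]
      omega
    · -- right region
      have hk : b + 1 ≤ k := by omega
      by_cases hkh : ∃ a' b', IsHillInterval Γ a' b' ∧ a' ≤ k ∧ k ≤ b'
      · obtain ⟨a', b', h', h1', h2'⟩ := hkh
        have ha' : b + 2 ≤ a' := by
          by_contra hcon
          exact not_hill_right hab h' (by omega) (by omega)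
        have hHk : hillFlatten Γ k = Γ k - 1 := hillFlatten_pos h' h1' h2'
        have hmH := r_mH hab hx1 hx2 hk
        have hm := r_m hab hx1 hx2 hk
        have hEhill := r_hill_to_E hab hx1 hx2 h' ha'
        have hRH : hillFlatten (pivotExcPath x Γ) k = pivotExcPath x Γ k - 1 :=
          hillFlatten_pos hEhill h1' h2'
        have hGk : Γ k = Γ (a'-1) + 1 := (h'.2.2 k h1' h2').1
        have hMle : Minf Γ (b+1) k ≤ Γ (a'-1) := Minf_le (by omega) (by omega)
        rw [pivot_eq, hHk, hmH, hRH, pivot_eq, hm]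
        omega
      · have hHk : hillFlatten Γ k = Γ k := hillFlatten_neg hkh
        have hmH := r_mH hab hx1 hx2 hk
        have hm := r_m hab hx1 hx2 hk
        have hRH : hillFlatten (pivotExcPath x Γ) k = pivotExcPath x Γ k := by
          apply hillFlatten_neg
          rintro ⟨a', b', hE', h1', h2'⟩
          exact hkh ⟨a', b', r_E_to_hill hΓ hab hx1 hx2 hk hE' h1' h2', h1', h2'⟩
        rw [pivot_eq, hHk, hmH, hRH, pivot_eq, hm]
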